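/- arXiv:2604.19555 — 6 statements merged into one kernel-verified Lean document; each statement's English description precedes it below -/
import Mathlib

section
/- For a dyadic cell Q of level ℓ in ℝ^d, the neighborhood N_Q, defined as the union of the level-(ℓ−1) parents of all level-ℓ cells contained in the support extension Q̂, is a hypercube made up of (p+1)^d cells of level ℓ−1; equivalently, N_Q coincides with the support of some B-spline of level ℓ−1 and degree p. -/
noncomputable section

/-- The dyadic cell of level `ℓ` with index `m` in `ℝ^d`:
the hypercube `∏ᵢ [mᵢ/2^ℓ, (mᵢ+1)/2^ℓ]`. -/
def dyadicCell (d : ℕ) (ℓ : ℤ) (m : Fin d → ℤ) : Set (Fin d → ℝ) :=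
  Set.univ.pi fun i => Set.Icc ((m i : ℝ) / 2 ^ ℓ) (((m i : ℝ) + 1) / 2 ^ ℓ)

/-- The support of the tensor-product B-spline of degree `p`, level `ℓ`, index `k`:
the hypercube `∏ᵢ [kᵢ/2^ℓ, (kᵢ+p+1)/2^ℓ]`. -/
def bsupp (d p : ℕ) (ℓ : ℤ) (k : Fin d → ℤ) : Set (Fin d → ℝ) :=
  Set.univ.pi fun i => Set.Icc ((k i : ℝ) / 2 ^ ℓ) (((k i : ℝ) + p + 1) / 2 ^ ℓ)

/-- The support extension `Q̂` of the level-`ℓ` cell of index `m`: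
the cube of `(2p+1)^d` level-`ℓ` cells centered at the cell. -/
def hatQ (d p : ℕ) (ℓ : ℤ) (m : Fin d → ℤ) : Set (Fin d → ℝ) :=
  Set.univ.pi fun i => Set.Icc (((m i : ℝ) - p) / 2 ^ ℓ) (((m i : ℝ) + p + 1) / 2 ^ ℓ)

/-- The neighborhood `N_Q` of the level-`ℓ` cell of index `m`: the union of the
level-`(ℓ-1)` parents of all level-`ℓ` cells contained in the support extension `Q̂`. -/
def NQ (d p : ℕ) (ℓ : ℤ) (m : Fin d → ℤ) : Set (Fin d → ℝ) :=
  ⋃ m' ∈ {m' : Fin d → ℤ | dyadicCell d ℓ m' ⊆ hatQ d p ℓ m},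
    dyadicCell d (ℓ - 1) fun i => Int.ediv (m' i) 2

lemma cell_subset_hatQ_iff (d p : ℕ) (ℓ : ℤ) (m m' : Fin d → ℤ) :
    dyadicCell d ℓ m' ⊆ hatQ d p ℓ m ↔ ∀ i, m i - p ≤ m' i ∧ m' i ≤ m i + p := by
  have hc : (0:ℝ) < 2 ^ ℓ := zpow_pos two_pos ℓ
  constructor
  · intro h i
    have h1 : (fun j => (m' j : ℝ) / 2 ^ ℓ) ∈ dyadicCell d ℓ m' := by
      intro j _
      exact ⟨le_refl _, (div_le_div_iff_of_pos_right hc).mpr (by linarith)⟩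
    have h2 : (fun j => ((m' j : ℝ) + 1) / 2 ^ ℓ) ∈ dyadicCell d ℓ m' := by
      intro j _
      exact ⟨(div_le_div_iff_of_pos_right hc).mpr (by linarith), le_refl _⟩
    have g1 := (h h1 i (Set.mem_univ i)).1
    have g2 := (h h2 i (Set.mem_univ i)).2
    rw [div_le_div_iff_of_pos_right hc] at g1 g2
    constructor
    · exact_mod_cast g1
    · have : (m' i : ℝ) + 1 ≤ (m i : ℝ) + p + 1 := g2
      have : (m' i : ℝ) ≤ (m i : ℝ) + p := by linarith
      exact_mod_cast this
  · intro h x hx i _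
    obtain ⟨h1, h2⟩ := h i
    obtain ⟨g1, g2⟩ := hx i (Set.mem_univ i)
    constructor
    · refine le_trans ?_ g1
      have : ((m i : ℝ) - p) ≤ (m' i : ℝ) := by exact_mod_cast h1
      exact (div_le_div_iff_of_pos_right hc).mpr (by linarith)
    · refine le_trans g2 ?_
      have : (m' i : ℝ) ≤ (m i : ℝ) + p := by exact_mod_cast h2
      exact (div_le_div_iff_of_pos_right hc).mpr (by linarith)

/-- For a dyadic cell `Q` of level `ℓ` in `ℝ^d`, the neighborhood `N_Q`
(the union of the level-`(ℓ-1)` parents of all level-`ℓ` cells contained in the support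
extension `Q̂`) is a hypercube made up of `(p+1)^d` cells of level `ℓ-1`; equivalently,
it coincides with the support of some B-spline of level `ℓ-1` and degree `p`. -/
theorem NQ_eq_bspline_support (d p : ℕ) (hp : 1 ≤ p) (ℓ : ℤ) (hℓ : 1 ≤ ℓ)
    (m : Fin d → ℤ) :
    ∃ k : Fin d → ℤ, NQ d p ℓ m = bsupp d p (ℓ - 1) k := by
  classical
  have hc : (0:ℝ) < 2 ^ (ℓ - 1) := zpow_pos two_pos _
  refine ⟨fun i => (m i - p) / 2, ?_⟩
  ext x
  simp only [NQ, Set.mem_iUnion, Set.mem_setOf_eq, bsupp, dyadicCell, Set.mem_pi,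
    Set.mem_univ, forall_true_left, Set.mem_Icc, exists_prop]
  constructor
  · rintro ⟨m', hm', hx⟩ i
    obtain ⟨h1, h2⟩ := (cell_subset_hatQ_iff d p ℓ m m').mp hm' i
    obtain ⟨hl, hr⟩ := hx i
    have ha : (m i - p) / 2 ≤ (m' i).ediv 2 := by
      show (m i - p) / 2 ≤ (m' i) / 2
      omega
    have hb : (m' i).ediv 2 + 1 ≤ (m i - p) / 2 + p + 1 := by
      show (m' i) / 2 + 1 ≤ (m i - p) / 2 + p + 1
      omega
    constructor
    · refine le_trans ?_ hl
      have : (((m i - p) / 2 : ℤ) : ℝ) ≤ (((m' i).ediv 2 : ℤ) : ℝ) := by exact_mod_cast ha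
      exact (div_le_div_iff_of_pos_right hc).mpr this
    · refine le_trans hr ?_
      have : (((m' i).ediv 2 : ℤ) : ℝ) + 1 ≤ (((m i - p) / 2 : ℤ) : ℝ) + p + 1 := by
        push_cast
        exact_mod_cast hb
      exact (div_le_div_iff_of_pos_right hc).mpr this
  · intro hx
    have key : ∀ i, ∃ mi : ℤ, (m i - p ≤ mi ∧ mi ≤ m i + p) ∧
        ((mi / 2 : ℤ) : ℝ) / 2 ^ (ℓ - 1) ≤ x i ∧
        x i ≤ (((mi / 2 : ℤ) : ℝ) + 1) / 2 ^ (ℓ - 1) := by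
      intro i
      obtain ⟨hl, hr⟩ := hx i
      set a : ℤ := (m i - p) / 2 with ha
      have hla : ((a : ℤ) : ℝ) ≤ x i * 2 ^ (ℓ - 1) := (div_le_iff₀ hc).mp hl
      have hra : x i * 2 ^ (ℓ - 1) ≤ (a : ℝ) + p + 1 := by
        rw [le_div_iff₀ hc] at hr; linarith
      set f : ℤ := ⌊x i * 2 ^ (ℓ - 1)⌋ with hf
      have hfa : a ≤ f := Int.le_floor.mpr hla
      set n : ℤ := min f (a + p) with hn
      have han : a ≤ n := le_min hfa (by omega)
      have hnap : n ≤ a + p := min_le_right _ _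
      have hmi : (max (m i - p) (2 * n)) / 2 = n := by
        rcases le_or_gt ((m i : ℤ) - p) (2 * n) with h | h
        · rw [max_eq_right h]; omega
        · rw [max_eq_left h.le]; omega
      refine ⟨max (m i - p) (2 * n), ⟨le_max_left _ _, max_le (by omega) (by omega)⟩, ?_, ?_⟩
      · rw [hmi, div_le_iff₀ hc]
        calc (n : ℝ) ≤ (f : ℝ) := by exact_mod_cast min_le_left _ _
          _ ≤ x i * 2 ^ (ℓ - 1) := Int.floor_le _
      · rw [hmi, le_div_iff₀ hc]
        rcases min_cases f (a + p) with ⟨h1, _⟩ | ⟨h1, _⟩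
        · rw [hn, h1]
          exact le_of_lt (Int.lt_floor_add_one _)
        · rw [hn, h1]
          push_cast
          linarith
    choose m' hbound hcell using key
    exact ⟨m', (cell_subset_hatQ_iff d p ℓ m m').mpr hbound, hcell⟩
end
end

section
/- For every hypercube C that is the support of a B-spline of level ℓ−1 and degree p in ℝ^d, there exist exactly 2^d dyadic cells Q₁,…,Q_{2^d} of level ℓ such that C = N_{Q_i} for each i, and moreover C equals the union of the support extensions Q̂₁ ∪ … ∪ Q̂_{2^d}. -/
/-!
In units of the level-`ℓ` mesh, the level-`ℓ` cells inside `Q̂` (for `Q` of index `m`) are those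
with index in the box `∏ᵢ [mᵢ - p, mᵢ + p]`. Halving indices maps this box onto
`∏ᵢ [⌊(mᵢ - p)/2⌋, ⌊(mᵢ - p)/2⌋ + p]`, so `N_Q` is always the level-`(ℓ-1)` B-spline support of
index `⌊(m - p)/2⌋`. Since supports determine their index, `N_Q = supp B_k` exactly when
`mᵢ ∈ {2kᵢ + p, 2kᵢ + p + 1}` for every `i`, which gives `2^d` cells; in each coordinate their two
extensions `[2kᵢ, 2kᵢ + 2p + 1]` and `[2kᵢ + 1, 2kᵢ + 2p + 2]` overlap and cover the support
`[2kᵢ, 2kᵢ + 2p + 2]`.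
-/

noncomputable section

open Set

section Interval

variable {K : Type*} [Field K] [LinearOrder K] [IsStrictOrderedRing K] {c : K}

lemma Icc_div_subset_Icc_div_iff (hc : 0 < c) {a b a' b' : K} (hab : a ≤ b) :
    Icc (a / c) (b / c) ⊆ Icc (a' / c) (b' / c) ↔ a' ≤ a ∧ b ≤ b' := by
  rw [Icc_subset_Icc_iff (div_le_div_of_nonneg_right hab hc.le),
    div_le_div_iff_of_pos_right hc, div_le_div_iff_of_pos_right hc]

lemma Icc_div_union_Icc_add_one_div (hc : 0 < c) {a b : K} (hab : a + 1 ≤ b) :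
    Icc (a / c) (b / c) ∪ Icc ((a + 1) / c) ((b + 1) / c) = Icc (a / c) ((b + 1) / c) := by
  have mono {x y : K} (h : x ≤ y) : x / c ≤ y / c := div_le_div_of_nonneg_right h hc.le
  rw [Icc_union_Icc' (mono hab) (mono (by linarith)), min_eq_left (mono (by linarith)),
    max_eq_right (mono (by linarith))]

variable [FloorRing K]

lemma Icc_intCast_add_one_eq_biUnion {a b : ℤ} (hab : a ≤ b) :
    Icc (a : K) (b + 1) = ⋃ j ∈ Icc a b, Icc (j : K) (j + 1) := by
  refine Subset.antisymm (fun x ⟨hax, hxb⟩ => ?_) (iUnion₂_subset fun j ⟨haj, hjb⟩ => ?_)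
  · -- the unit interval starting at `⌊x⌋`, moved back into `[a, b]` when `x = b + 1`
    refine mem_biUnion (x := min ⌊x⌋ b) ⟨le_min (Int.le_floor.2 hax) hab, min_le_right _ _⟩
      ⟨(Int.cast_le.2 (min_le_left _ _)).trans (Int.floor_le x), ?_⟩
    rcases le_total ⌊x⌋ b with h | h
    · rw [min_eq_left h]; exact (Int.lt_floor_add_one x).le
    · rw [min_eq_right h]; exact hxb
  · exact Icc_subset_Icc (by exact_mod_cast haj) (by exact_mod_cast (by omega : j + 1 ≤ b + 1))

lemma Icc_intCast_div_eq_biUnion (hc : 0 < c) {a b : ℤ} (hab : a ≤ b) :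
    Icc (a / c) ((b + 1) / c) = ⋃ j ∈ Icc a b, Icc ((j : K) / c) ((j + 1) / c) := by
  simp only [← preimage_mul_const_Icc₀ _ _ hc, ← preimage_iUnion₂,
    Icc_intCast_add_one_eq_biUnion hab]

end Interval

lemma Int.image_ediv_Icc {n : ℤ} (hn : 0 < n) {a b : ℤ} (hab : a ≤ b) :
    (· / n) '' Icc a b = Icc (a / n) (b / n) := by
  refine Subset.antisymm (image_subset_iff.2 fun x ⟨hax, hxb⟩ =>
    ⟨Int.ediv_le_ediv hn hax, Int.ediv_le_ediv hn hxb⟩) fun j ⟨haj, hjb⟩ => ?_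
  refine ⟨max (n * j) a, ⟨le_max_right _ _, max_le ?_ hab⟩, ?_⟩
  · exact (Int.mul_ediv_self_le hn.ne').trans' (mul_le_mul_of_nonneg_left hjb hn.le)
  · show max (n * j) a / n = j
    rcases le_total a (n * j) with h | h
    · rw [max_eq_left h, Int.mul_ediv_cancel_left _ hn.ne']
    · rw [max_eq_right h]
      exact le_antisymm haj
        ((Int.mul_ediv_cancel_left _ hn.ne').symm.trans_le (Int.ediv_le_ediv hn h))

lemma div_two_zpow_sub_one (x : ℝ) (ℓ : ℤ) : x / 2 ^ (ℓ - 1) = 2 * x / 2 ^ ℓ := by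
  rw [zpow_sub_one₀ two_ne_zero]
  field_simp

section Cells

variable (d p : ℕ) (ℓ : ℤ)

lemma dyadicCell_subset_hatQ_iff (m m' : Fin d → ℤ) :
    dyadicCell d ℓ m' ⊆ hatQ d p ℓ m ↔ m' ∈ univ.pi fun i => Icc (m i - p) (m i + p) := by
  have hc : (0 : ℝ) < 2 ^ ℓ := by positivity
  simp only [dyadicCell, hatQ, univ_pi_subset_univ_pi_iff,
    Icc_div_subset_Icc_div_iff hc (le_add_of_nonneg_right zero_le_one), mem_univ_pi, mem_Icc,
    Icc_eq_empty_iff, div_le_div_iff_of_pos_right hc,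
    le_add_iff_nonneg_right, zero_le_one, not_true_eq_false, exists_false, or_false,
    add_le_add_iff_right]
  exact_mod_cast Iff.rfl

lemma bsupp_eq_biUnion_dyadicCell (k : Fin d → ℤ) :
    bsupp d p ℓ k = ⋃ j ∈ univ.pi fun i => Icc (k i) (k i + p), dyadicCell d ℓ j := by
  refine Eq.trans ?_
    (biUnion_univ_pi _ fun _ (j : ℤ) => Icc ((j : ℝ) / 2 ^ ℓ) ((j + 1) / 2 ^ ℓ)).symm
  refine congrArg (univ.pi ·) (funext fun i => ?_)
  rw [← Icc_intCast_div_eq_biUnion (by positivity) (by omega)]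
  push_cast
  rfl

lemma NQ_eq_bsupp (m : Fin d → ℤ) : NQ d p ℓ m = bsupp d p (ℓ - 1) fun i => (m i - p) / 2 := by
  have hwindow :
      {m' | dyadicCell d ℓ m' ⊆ hatQ d p ℓ m} = univ.pi fun i => Icc (m i - p) (m i + p) :=
    ext fun m' => dyadicCell_subset_hatQ_iff d p ℓ m m'
  calc NQ d p ℓ m
      = ⋃ j ∈ Pi.map (fun _ => (· / 2)) '' univ.pi (fun i => Icc (m i - p) (m i + p)),
          dyadicCell d (ℓ - 1) j := by rw [biUnion_image, ← hwindow]; rfl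
    _ = _ := by
      rw [piMap_image_univ_pi, bsupp_eq_biUnion_dyadicCell]
      have himage (i : Fin d) :
          (· / 2) '' Icc (m i - p) (m i + p) = Icc ((m i - p) / 2) ((m i - p) / 2 + p) := by
        rw [Int.image_ediv_Icc two_pos (by omega)]
        congr 1
        omega
      simp only [himage]

lemma bsupp_injective : Function.Injective (bsupp d p ℓ) := by
  intro k k' h
  have hc : (0 : ℝ) < 2 ^ ℓ := by positivity
  have hle (k : Fin d → ℤ) : (fun i => (k i : ℝ) / 2 ^ ℓ) ≤ fun i => ((k i : ℝ) + p + 1) / 2 ^ ℓ :=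
    fun i => div_le_div_of_nonneg_right (by linarith [Nat.cast_nonneg (α := ℝ) p]) hc.le
  simp only [bsupp, pi_univ_Icc] at h
  funext i
  exact_mod_cast (div_left_inj' hc.ne').1 (congr_fun ((Icc_eq_Icc_iff (hle k)).1 h).1 i)

lemma NQ_eq_bsupp_iff (m k : Fin d → ℤ) :
    NQ d p ℓ m = bsupp d p (ℓ - 1) k ↔ ∀ i, m i = 2 * k i + p ∨ m i = 2 * k i + p + 1 := by
  rw [NQ_eq_bsupp, (bsupp_injective d p (ℓ - 1)).eq_iff, funext_iff]
  exact forall_congr' fun i => by omega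

lemma bsupp_sub_one_eq_biUnion_hatQ (k : Fin d → ℤ) :
    bsupp d p (ℓ - 1) k =
      ⋃ m ∈ univ.pi fun i => ({2 * k i + p, 2 * k i + p + 1} : Set ℤ), hatQ d p ℓ m := by
  refine Eq.trans ?_
    (biUnion_univ_pi _ fun _ (m : ℤ) => Icc (((m : ℝ) - p) / 2 ^ ℓ) ((m + p + 1) / 2 ^ ℓ)).symm
  refine congrArg (univ.pi ·) (funext fun i => ?_)
  have hunion := Icc_div_union_Icc_add_one_div (zpow_pos (two_pos : (0 : ℝ) < 2) ℓ)
    (a := 2 * k i) (b := 2 * k i + 2 * p + 1) (by linarith [Nat.cast_nonneg (α := ℝ) p])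
  rw [biUnion_pair, div_two_zpow_sub_one, div_two_zpow_sub_one]
  push_cast
  ring_nf at hunion ⊢
  exact hunion.symm

end Cells

theorem core_cells_general (d p : ℕ) (ℓ : ℤ) (k : Fin d → ℤ) :
    ∃ S : Finset (Fin d → ℤ),
      S.card = 2 ^ d ∧
      (∀ m ∈ S, NQ d p ℓ m = bsupp d p (ℓ - 1) k) ∧
      (∀ m : Fin d → ℤ, NQ d p ℓ m = bsupp d p (ℓ - 1) k → m ∈ S) ∧
      bsupp d p (ℓ - 1) k = ⋃ m ∈ S, hatQ d p ℓ m := by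
  set S := Fintype.piFinset fun i => ({2 * k i + p, 2 * k i + p + 1} : Finset ℤ)
  have hmem (m : Fin d → ℤ) : m ∈ S ↔ NQ d p ℓ m = bsupp d p (ℓ - 1) k := by
    simp only [S, NQ_eq_bsupp_iff, Fintype.mem_piFinset, Finset.mem_insert, Finset.mem_singleton]
  refine ⟨S, ?_, fun m => (hmem m).1, fun m => (hmem m).2, ?_⟩
  · have hpair (i : Fin d) : ({2 * k i + p, 2 * k i + p + 1} : Finset ℤ).card = 2 :=
      Finset.card_pair (by omega)
    simp only [S, Fintype.card_piFinset, hpair, Finset.prod_const, Finset.card_univ,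
      Fintype.card_fin]
  · rw [bsupp_sub_one_eq_biUnion_hatQ, ← Finset.set_biUnion_coe, Fintype.coe_piFinset]
    simp only [Finset.coe_insert, Finset.coe_singleton]

/-- For every hypercube `C` that is the support of a B-spline of level
`ℓ-1` and degree `p` in `ℝ^d`, there exist exactly `2^d` dyadic cells `Q₁, …, Q_{2^d}`
of level `ℓ` such that `C = N_{Qᵢ}` for each `i`, and moreover `C` equals the union of
the support extensions `Q̂₁ ∪ … ∪ Q̂_{2^d}`. -/
theorem core_cells (d p : ℕ) (hp : 1 ≤ p) (ℓ : ℤ) (hℓ : 1 ≤ ℓ) (k : Fin d → ℤ) :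
    ∃ S : Finset (Fin d → ℤ),
      S.card = 2 ^ d ∧
      (∀ m ∈ S, NQ d p ℓ m = bsupp d p (ℓ - 1) k) ∧
      (∀ m : Fin d → ℤ, NQ d p ℓ m = bsupp d p (ℓ - 1) k → m ∈ S) ∧
      bsupp d p (ℓ - 1) k = ⋃ m ∈ S, hatQ d p ℓ m :=
  core_cells_general d p ℓ k
end
end

section
/- Let (Q₀, Q₁, …, Q_k) be a sequence of dyadic cells with lev(Q_j) = lev(Q₀) + j, such that Q_{j−1} ⊆ N_{Q_j} for j = 1,…,k, and let Q' be a child of Q₀. Then dist(Q', Q_k) ≤ √d·(2p+1)·2^{−lev(Q')−1}·(1 + Σ_{j=1}^{k} 2^{−j+1}) < 3·√d·(2p+1)·2^{−lev(Q')−1}, where dist denotes the Euclidean distance between cell midpoints and lev(Q') = lev(Q₀)+1. -/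
noncomputable section

/-- The midpoint (barycenter) of the dyadic cell of level `ℓ` and index `m`,
as a point of Euclidean space. -/
def cellCenter (d : ℕ) (ℓ : ℤ) (m : Fin d → ℤ) : EuclideanSpace ℝ (Fin d) :=
  WithLp.toLp 2 fun i => ((m i : ℝ) + 1 / 2) / 2 ^ ℓ

/-! A dyadic cell contained in a box has its center, coordinatewise, within half the difference
of the side lengths from the box's center. A child therefore lies `2^{-lev Q' - 1}` from its parent
in each coordinate. `N_Q` fits in a box of `2p + 3` level-`ℓ` cells, offset by half a cell from `Q`,
so consecutive cells of the chain are `(2p+1) 2^{-ℓ-1}` apart per coordinate. Passing to the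
Euclidean norm costs a factor `√d`, and the triangle inequality along the chain leaves a geometric
series whose sum is less than `2`. -/

open Set

lemma dist_le_sqrt_card_mul_of_forall_abs_sub_le {d : ℕ} {x y : EuclideanSpace ℝ (Fin d)} {r : ℝ}
    (hr : 0 ≤ r) (h : ∀ i, |x i - y i| ≤ r) : dist x y ≤ √d * r := by
  calc dist x y = √(∑ i, dist (x i) (y i) ^ 2) := EuclideanSpace.dist_eq x y
    _ ≤ √(∑ _i : Fin d, r ^ 2) := by
      gcongr with i
      exact h i
    _ = √d * r := by
      rw [Finset.sum_const, Finset.card_univ, Fintype.card_fin, nsmul_eq_mul,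
        Real.sqrt_mul (Nat.cast_nonneg d), Real.sqrt_sq hr]

section Cells

variable {d : ℕ}

lemma dyadicCell_subset_pi_Icc_iff {ℓ : ℤ} {m : Fin d → ℤ} {a b : Fin d → ℝ} :
    dyadicCell d ℓ m ⊆ univ.pi (fun i => Icc (a i) (b i)) ↔
      ∀ i, a i ≤ m i / 2 ^ ℓ ∧ (m i + 1) / 2 ^ ℓ ≤ b i := by
  have hle : ∀ i, (m i : ℝ) / 2 ^ ℓ ≤ (m i + 1) / 2 ^ ℓ := fun i =>
    div_le_div_of_nonneg_right (by linarith) (by positivity)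
  rw [dyadicCell, univ_pi_subset_univ_pi_iff]
  simp only [Icc_subset_Icc_iff (hle _), Icc_eq_empty_iff, hle, not_true, exists_false, or_false]

lemma abs_cellCenter_sub_midpoint_le {ℓ : ℤ} {m : Fin d → ℤ} {a b : Fin d → ℝ}
    (h : dyadicCell d ℓ m ⊆ univ.pi (fun i => Icc (a i) (b i))) (i : Fin d) :
    |cellCenter d ℓ m i - (a i + b i) / 2| ≤ (b i - a i - (2 ^ ℓ)⁻¹) / 2 := by
  obtain ⟨ha, hb⟩ := dyadicCell_subset_pi_Icc_iff.mp h i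
  have hc : cellCenter d ℓ m i = ((m i : ℝ) / 2 ^ ℓ + (m i + 1) / 2 ^ ℓ) / 2 := by
    simp only [cellCenter]
    ring
  have hw : ((m i : ℝ) + 1) / 2 ^ ℓ = m i / 2 ^ ℓ + (2 ^ ℓ)⁻¹ := by ring
  rw [hc, abs_le]
  constructor <;> linarith

lemma dist_cellCenter_child_le {ℓ : ℤ} {m m' : Fin d → ℤ}
    (h : dyadicCell d (ℓ + 1) m' ⊆ dyadicCell d ℓ m) :
    dist (cellCenter d (ℓ + 1) m') (cellCenter d ℓ m) ≤ √d * 2 ^ (-(ℓ + 1) - 1) := by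
  refine dist_le_sqrt_card_mul_of_forall_abs_sub_le (by positivity) fun i => ?_
  have := abs_cellCenter_sub_midpoint_le h i
  convert this using 2
  · simp only [cellCenter]; ring
  · simp only [zpow_sub₀ (two_ne_zero (α := ℝ)), zpow_neg, zpow_add₀ (two_ne_zero (α := ℝ)),
      zpow_one]
    ring

/-- The parent of the level-`ℓ` cell of index `μ` covers the level-`ℓ` indices
`2 (μ / 2), 2 (μ / 2) + 1`, which lie in `[μ - 1, μ + 1]`. -/
lemma NQ_subset_pi_Icc (p : ℕ) (ℓ : ℤ) (M : Fin d → ℤ) :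
    NQ d p ℓ M ⊆ univ.pi fun i => Icc ((M i - p - 1) / 2 ^ ℓ) ((M i + p + 2) / 2 ^ ℓ) := by
  intro x hx
  simp only [NQ, mem_iUnion₂] at hx
  obtain ⟨μ, hμ, hxμ⟩ := hx
  intro i _
  obtain ⟨hlo, hhi⟩ := hxμ i (mem_univ i)
  obtain ⟨hμlo, hμhi⟩ := dyadicCell_subset_pi_Icc_iff.mp hμ i
  have ht : (0 : ℝ) < 2 ^ ℓ := by positivity
  rw [div_le_div_iff_of_pos_right ht] at hμlo hμhi
  rw [zpow_sub_one₀ two_ne_zero, ← div_eq_mul_inv] at hlo hhi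
  set q := Int.ediv (μ i) 2 with hq_def
  have hq : (μ i : ℝ) - 1 ≤ 2 * q ∧ 2 * (q : ℝ) ≤ μ i := by
    change q = μ i / 2 at hq_def
    constructor <;> norm_cast <;> omega
  constructor
  · calc ((M i : ℝ) - p - 1) / 2 ^ ℓ ≤ 2 * q / 2 ^ ℓ := by gcongr; linarith
      _ = q / (2 ^ ℓ / 2) := by field_simp
      _ ≤ x i := hlo
  · calc x i ≤ (q + 1) / (2 ^ ℓ / 2) := hhi
      _ = (2 * q + 2) / 2 ^ ℓ := by field_simp
      _ ≤ (M i + p + 2) / 2 ^ ℓ := by gcongr; linarith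

lemma dist_cellCenter_le_of_subset_NQ {p : ℕ} {ℓ : ℤ} {a M : Fin d → ℤ}
    (h : dyadicCell d (ℓ - 1) a ⊆ NQ d p ℓ M) :
    dist (cellCenter d (ℓ - 1) a) (cellCenter d ℓ M) ≤ √d * ((2 * p + 1) * 2 ^ (-ℓ - 1)) := by
  refine dist_le_sqrt_card_mul_of_forall_abs_sub_le (by positivity) fun i => ?_
  have := abs_cellCenter_sub_midpoint_le (h.trans (NQ_subset_pi_Icc p ℓ M)) i
  convert this using 2
  · simp only [cellCenter]; ring
  · simp only [zpow_sub₀ (two_ne_zero (α := ℝ)), zpow_neg, zpow_one]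
    ring

end Cells

lemma dist_cellCenter_le_sum_of_chain {d p : ℕ} {ℓ0 : ℤ} {k : ℕ} {m : ℕ → Fin d → ℤ}
    (hchain : ∀ j : ℕ, 1 ≤ j → j ≤ k →
      dyadicCell d (ℓ0 + (j : ℤ) - 1) (m (j - 1)) ⊆ NQ d p (ℓ0 + (j : ℤ)) (m j)) :
    dist (cellCenter d ℓ0 (m 0)) (cellCenter d (ℓ0 + k) (m k)) ≤
      ∑ j ∈ Finset.Icc 1 k, √d * ((2 * p + 1) * 2 ^ (-(ℓ0 + j) - 1)) := by
  rw [← Finset.Ico_add_one_right_eq_Icc, Finset.sum_Ico_eq_sum_range, Nat.add_sub_cancel]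
  have := dist_le_range_sum_of_dist_le (f := fun j : ℕ => cellCenter d (ℓ0 + j) (m j)) k
    (d := fun j => √d * ((2 * p + 1) * 2 ^ (-(ℓ0 + ↑(j + 1)) - 1))) fun {j} hj => by
      have hstep := dist_cellCenter_le_of_subset_NQ (hchain (j + 1) (by omega) (by omega))
      simpa only [Nat.add_sub_cancel, Nat.cast_succ, ← add_assoc, add_sub_cancel_right] using hstep
  simpa [add_comm 1] using this

lemma sum_Icc_two_zpow_neg_add_one (k : ℕ) :
    ∑ j ∈ Finset.Icc 1 k, (2 : ℝ) ^ (-(j : ℤ) + 1) = 2 - 2 ^ (-(k : ℤ) + 1) := by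
  induction k with
  | zero => simp
  | succ k ih =>
    rw [Finset.sum_Icc_succ_top (by omega), ih, Nat.cast_succ,
      show -((k : ℤ) + 1) + 1 = -(k : ℤ) + 1 - 1 by ring, zpow_sub_one₀ two_ne_zero]
    ring

theorem dist_child_to_chain_general (d p : ℕ) (hd : 0 < d) (ℓ0 : ℤ) (k : ℕ)
    (m : ℕ → Fin d → ℤ)
    (hchain : ∀ j : ℕ, 1 ≤ j → j ≤ k →
      dyadicCell d (ℓ0 + (j : ℤ) - 1) (m (j - 1)) ⊆ NQ d p (ℓ0 + (j : ℤ)) (m j))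
    (m' : Fin d → ℤ)
    (hchild : dyadicCell d (ℓ0 + 1) m' ⊆ dyadicCell d ℓ0 (m 0)) :
    dist (cellCenter d (ℓ0 + 1) m') (cellCenter d (ℓ0 + (k : ℤ)) (m k)) ≤
        Real.sqrt d * (2 * p + 1) * 2 ^ (-(ℓ0 + 1) - 1) *
          (1 + ∑ j ∈ Finset.Icc 1 k, (2 : ℝ) ^ (-(j : ℤ) + 1)) ∧
      Real.sqrt d * (2 * p + 1) * 2 ^ (-(ℓ0 + 1) - 1) *
          (1 + ∑ j ∈ Finset.Icc 1 k, (2 : ℝ) ^ (-(j : ℤ) + 1)) <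
        3 * (Real.sqrt d * (2 * p + 1) * 2 ^ (-(ℓ0 + 1) - 1)) := by
  set C : ℝ := √d * (2 * p + 1) * 2 ^ (-(ℓ0 + 1) - 1)
  have hchild_le : √d * 2 ^ (-(ℓ0 + 1) - 1) ≤ C := by
    simp only [C, mul_right_comm _ (2 * (p : ℝ) + 1)]
    exact le_mul_of_one_le_right (by positivity) (by simp)
  have hterm : ∀ j : ℕ, √d * ((2 * p + 1) * 2 ^ (-(ℓ0 + j) - 1)) = C * 2 ^ (-(j : ℤ) + 1) := by
    intro j
    rw [show -(ℓ0 + j) - 1 = (-(ℓ0 + 1) - 1) + (-(j : ℤ) + 1) by ring, zpow_add₀ two_ne_zero]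
    ring
  constructor
  · calc dist (cellCenter d (ℓ0 + 1) m') (cellCenter d (ℓ0 + k) (m k))
        ≤ dist (cellCenter d (ℓ0 + 1) m') (cellCenter d ℓ0 (m 0)) +
            dist (cellCenter d ℓ0 (m 0)) (cellCenter d (ℓ0 + k) (m k)) := dist_triangle _ _ _
      _ ≤ C + ∑ j ∈ Finset.Icc 1 k, C * 2 ^ (-(j : ℤ) + 1) := by
        simp only [← hterm]
        exact add_le_add ((dist_cellCenter_child_le hchild).trans hchild_le)
          (dist_cellCenter_le_sum_of_chain hchain)
      _ = C * (1 + ∑ j ∈ Finset.Icc 1 k, (2 : ℝ) ^ (-(j : ℤ) + 1)) := by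
        rw [mul_add, mul_one, Finset.mul_sum]
  · rw [sum_Icc_two_zpow_neg_add_one, mul_comm 3]
    have : (0 : ℝ) < 2 ^ (-(k : ℤ) + 1) := by positivity
    gcongr
    linarith

/-- Let `(Q₀, Q₁, …, Q_k)` be a sequence of dyadic cells with
`lev Q_j = lev Q₀ + j`, such that `Q_{j-1} ⊆ N_{Q_j}` for `j = 1, …, k`, and let `Q'`
be a child of `Q₀` (so `lev Q' = lev Q₀ + 1`). Then
`dist(Q', Q_k) ≤ √d (2p+1) 2^{-lev Q' - 1} (1 + ∑_{j=1}^k 2^{-j+1})`, and this bound is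
strictly less than `3 √d (2p+1) 2^{-lev Q' - 1}`, where `dist` is the Euclidean distance
between the cell midpoints. -/
theorem dist_child_to_chain (d p : ℕ) (hd : 0 < d) (hp : 1 ≤ p) (ℓ0 : ℤ) (k : ℕ)
    (m : ℕ → Fin d → ℤ)
    (hchain : ∀ j : ℕ, 1 ≤ j → j ≤ k →
      dyadicCell d (ℓ0 + (j : ℤ) - 1) (m (j - 1)) ⊆ NQ d p (ℓ0 + (j : ℤ)) (m j))
    (m' : Fin d → ℤ)
    (hchild : dyadicCell d (ℓ0 + 1) m' ⊆ dyadicCell d ℓ0 (m 0)) :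
    dist (cellCenter d (ℓ0 + 1) m') (cellCenter d (ℓ0 + (k : ℤ)) (m k)) ≤
        Real.sqrt d * (2 * p + 1) * 2 ^ (-(ℓ0 + 1) - 1) *
          (1 + ∑ j ∈ Finset.Icc 1 k, (2 : ℝ) ^ (-(j : ℤ) + 1)) ∧
      Real.sqrt d * (2 * p + 1) * 2 ^ (-(ℓ0 + 1) - 1) *
          (1 + ∑ j ∈ Finset.Icc 1 k, (2 : ℝ) ^ (-(j : ℤ) + 1)) <
        3 * (Real.sqrt d * (2 * p + 1) * 2 ^ (-(ℓ0 + 1) - 1)) :=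
  dist_child_to_chain_general d p hd ℓ0 k m hchain m' hchild
end
end

section
/- If the hierarchy of subdomains is clustered, then for every ℓ = 1,…,n−1: Ω_ℓ = ⋃ {N_Q ∩ Ω₀ : Q a level-ℓ cell with Q ⊆ ω_ℓ} = ⋃ {Q̃ : Q a level-ℓ cell with Q ⊆ ω_ℓ}. -/
noncomputable section

/-- The unit cube `Ω₀ = [0,1]^d`. -/
def unitCube (d : ℕ) : Set (Fin d → ℝ) :=
  Set.univ.pi fun _ => Set.Icc (0 : ℝ) 1

/-- `ω_ℓ`: the union of the level-`ℓ` cells of the mesh of `Ω 0` whose local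
support extension `Q̃ = Q̂ ∩ Ω 0` is contained in `Ω ℓ`. -/
def omegaSet (d p : ℕ) (Ω : ℕ → Set (Fin d → ℝ)) (ℓ : ℕ) : Set (Fin d → ℝ) :=
  ⋃ m ∈ {m : Fin d → ℤ | dyadicCell d (ℓ : ℤ) m ⊆ Ω 0 ∧
      hatQ d p (ℓ : ℤ) m ∩ Ω 0 ⊆ Ω ℓ},
    dyadicCell d (ℓ : ℤ) m

/-- The hierarchy of subdomains is clustered: every `Ω ℓ` (for `ℓ ≥ 1`) is a union of
sets `C ∩ Ω 0` where each `C` is a `p`-form of level `ℓ-1`, i.e. the support of a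
level-`(ℓ-1)` B-spline containing the support extension of some level-`ℓ` cell of the
mesh of `Ω 0`. -/
def clustered (d p : ℕ) (Ω : ℕ → Set (Fin d → ℝ)) : Prop :=
  ∀ ℓ : ℕ, 1 ≤ ℓ →
    ∃ K : Set (Fin d → ℤ),
      (∀ k ∈ K, ∃ m : Fin d → ℤ, dyadicCell d (ℓ : ℤ) m ⊆ Ω 0 ∧
        hatQ d p (ℓ : ℤ) m ⊆ bsupp d p ((ℓ : ℤ) - 1) k) ∧
      Ω ℓ = ⋃ k ∈ K, bsupp d p ((ℓ : ℤ) - 1) k ∩ Ω 0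

namespace ClusteredAux

lemma two_zpow_pos (ℓ : ℤ) : (0:ℝ) < 2 ^ ℓ := zpow_pos (by norm_num) _

lemma zpow_pred (ℓ : ℤ) : (2:ℝ) ^ ℓ = 2 * 2 ^ (ℓ - 1) := by
  have h : (2:ℝ) ^ (ℓ - 1 + 1) = 2 ^ (ℓ - 1) * 2 := zpow_add_one₀ two_ne_zero _
  rw [sub_add_cancel] at h
  rw [h]; ring

lemma mem_box {d : ℕ} {ℓ : ℤ} {a b : Fin d → ℝ} {x : Fin d → ℝ} :
    x ∈ Set.univ.pi (fun i => Set.Icc (a i / 2 ^ ℓ) (b i / 2 ^ ℓ)) ↔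
      ∀ i, a i ≤ 2 ^ ℓ * x i ∧ 2 ^ ℓ * x i ≤ b i := by
  have h := two_zpow_pos ℓ
  simp only [Set.mem_pi, Set.mem_univ, forall_true_left, Set.mem_Icc]
  refine forall_congr' fun i => ?_
  rw [div_le_iff₀ h, le_div_iff₀ h, mul_comm (x i)]

lemma mem_cell {d : ℕ} {ℓ : ℤ} {m : Fin d → ℤ} {x : Fin d → ℝ} :
    x ∈ dyadicCell d ℓ m ↔ ∀ i, (m i : ℝ) ≤ 2 ^ ℓ * x i ∧ 2 ^ ℓ * x i ≤ (m i : ℝ) + 1 := by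
  unfold dyadicCell; exact mem_box

lemma mem_hatQ {d p : ℕ} {ℓ : ℤ} {m : Fin d → ℤ} {x : Fin d → ℝ} :
    x ∈ hatQ d p ℓ m ↔
      ∀ i, (m i : ℝ) - p ≤ 2 ^ ℓ * x i ∧ 2 ^ ℓ * x i ≤ (m i : ℝ) + p + 1 := by
  unfold hatQ; exact mem_box

lemma mem_bsupp_pred {d p : ℕ} {ℓ : ℤ} {k : Fin d → ℤ} {x : Fin d → ℝ} :
    x ∈ bsupp d p (ℓ - 1) k ↔
      ∀ i, 2 * (k i : ℝ) ≤ 2 ^ ℓ * x i ∧ 2 ^ ℓ * x i ≤ 2 * (k i : ℝ) + 2 * p + 2 := by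
  unfold bsupp; rw [mem_box]
  refine forall_congr' fun i => ?_
  rw [zpow_pred ℓ]
  simp only [mul_assoc]
  constructor <;> rintro ⟨h1, h2⟩ <;> constructor <;> linarith

lemma mem_cell_pred {d : ℕ} {ℓ : ℤ} {q : Fin d → ℤ} {x : Fin d → ℝ} :
    x ∈ dyadicCell d (ℓ - 1) q ↔
      ∀ i, 2 * (q i : ℝ) ≤ 2 ^ ℓ * x i ∧ 2 ^ ℓ * x i ≤ 2 * (q i : ℝ) + 2 := by
  unfold dyadicCell; rw [mem_box]
  refine forall_congr' fun i => ?_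
  rw [zpow_pred ℓ]
  simp only [mul_assoc]
  constructor <;> rintro ⟨h1, h2⟩ <;> constructor <;> linarith

lemma mem_unit {d : ℕ} {x : Fin d → ℝ} :
    x ∈ unitCube d ↔ ∀ i, 0 ≤ x i ∧ x i ≤ 1 := by
  unfold unitCube
  simp only [Set.mem_pi, Set.mem_univ, forall_true_left, Set.mem_Icc]

lemma mem_unit_scaled {d : ℕ} (ℓ : ℤ) {x : Fin d → ℝ} :
    x ∈ unitCube d ↔ ∀ i, 0 ≤ 2 ^ ℓ * x i ∧ 2 ^ ℓ * x i ≤ 2 ^ ℓ := by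
  rw [mem_unit]
  refine forall_congr' fun i => ?_
  have h := two_zpow_pos ℓ
  constructor <;> rintro ⟨h1, h2⟩ <;> constructor <;> nlinarith

lemma scale_div {ℓ : ℤ} (t : ℝ) : (2:ℝ) ^ ℓ * (t / 2 ^ ℓ) = t := by
  field_simp

lemma cast_pow (ℓ : ℕ) : ((2 ^ ℓ : ℤ) : ℝ) = (2:ℝ) ^ (ℓ : ℤ) := by
  rw [zpow_natCast]; push_cast; ring

lemma center_mem_cell {d : ℕ} {ℓ : ℤ} (m : Fin d → ℤ) :
    (fun i => ((m i : ℝ) + 1/2) / 2 ^ ℓ) ∈ dyadicCell d ℓ m := by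
  rw [mem_cell]
  intro i

  rw [scale_div]
  constructor <;> norm_num

lemma cell_subset_unit {d ℓ : ℕ} {m : Fin d → ℤ}
    (h : dyadicCell d (ℓ : ℤ) m ⊆ unitCube d) (i : Fin d) :
    0 ≤ m i ∧ m i + 1 ≤ 2 ^ ℓ := by
  have hc := h (center_mem_cell (ℓ := (ℓ:ℤ)) m)
  rw [mem_unit_scaled (ℓ:ℤ)] at hc
  obtain ⟨h1, h2⟩ := hc i
  rw [scale_div] at h1 h2
  rw [← cast_pow] at h2
  have e1 : (0:ℤ) ≤ 2 * m i + 1 := by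
    have : (0:ℝ) ≤ 2 * (m i:ℝ) + 1 := by linarith
    exact_mod_cast this
  have e2 : 2 * m i + 1 ≤ 2 * 2 ^ ℓ := by
    have : (2 * (m i:ℝ) + 1 : ℝ) ≤ 2 * ((2^ℓ:ℤ):ℝ) := by linarith
    exact_mod_cast this
  omega

lemma cell_subset_hatQ {d p : ℕ} {ℓ : ℤ} {m m' : Fin d → ℤ}
    (h : dyadicCell d ℓ m' ⊆ hatQ d p ℓ m) (i : Fin d) :
    m i - p ≤ m' i ∧ m' i ≤ m i + p := by
  have hc := h (center_mem_cell m')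
  rw [mem_hatQ] at hc
  obtain ⟨h1, h2⟩ := hc i
  rw [scale_div] at h1 h2
  constructor
  · have e : (2 * (m i - p) : ℤ) ≤ 2 * m' i + 1 := by
      have : 2 * ((m i:ℝ) - p) ≤ 2 * (m' i:ℝ) + 1 := by linarith
      exact_mod_cast this
    omega
  · have e : (2 * m' i + 1 : ℤ) ≤ 2 * (m i + p + 1) := by
      have : 2 * (m' i:ℝ) + 1 ≤ 2 * ((m i:ℝ) + p + 1) := by linarith
      exact_mod_cast this
    omega

lemma hatQ_subset_bsupp {d p : ℕ} {ℓ : ℤ} {m k : Fin d → ℤ}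
    (h : hatQ d p ℓ m ⊆ bsupp d p (ℓ - 1) k) (i : Fin d) :
    2 * k i + p ≤ m i ∧ m i ≤ 2 * k i + p + 1 := by
  have hp0 : (0:ℝ) ≤ p := Nat.cast_nonneg p
  have hu : (fun j => ((m j : ℝ) - p + 1/2) / 2 ^ ℓ) ∈ hatQ d p ℓ m := by
    rw [mem_hatQ]; intro j; rw [scale_div]
    constructor <;> linarith
  have hv : (fun j => ((m j : ℝ) + p + 1/2) / 2 ^ ℓ) ∈ hatQ d p ℓ m := by
    rw [mem_hatQ]; intro j; rw [scale_div]
    constructor <;> linarith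
  have h1 := (mem_bsupp_pred.mp (h hu) i).1
  have h2 := (mem_bsupp_pred.mp (h hv) i).2
  rw [scale_div] at h1 h2
  constructor
  · have e : (4 * k i : ℤ) ≤ 2 * m i - 2 * p + 1 := by
      have : 4 * (k i:ℝ) ≤ 2 * (m i:ℝ) - 2 * p + 1 := by linarith
      exact_mod_cast this
    omega
  · have e : (2 * m i + 2 * p + 1 : ℤ) ≤ 4 * k i + 4 * p + 4 := by
      have : 2 * (m i:ℝ) + 2 * p + 1 ≤ 4 * (k i:ℝ) + 4 * p + 4 := by linarith
      exact_mod_cast this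
    omega

lemma hatQ_subset_NQ {d p : ℕ} {ℓ : ℤ} (m : Fin d → ℤ) :
    hatQ d p ℓ m ⊆ NQ d p ℓ m := by
  intro x hx
  rw [mem_hatQ] at hx
  have hp0 : (0:ℝ) ≤ p := Nat.cast_nonneg p
  set m' : Fin d → ℤ := fun i => max (m i - p) (min (m i + p) ⌊2 ^ ℓ * x i⌋) with hm'
  have hcast : ∀ i, (m' i : ℝ) =
      max ((m i:ℝ) - p) (min ((m i:ℝ) + p) ((⌊2 ^ ℓ * x i⌋ : ℤ) : ℝ)) := by
    intro i; simp only [hm']; push_cast; ring_nf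
  have hbd : ∀ i, m i - p ≤ m' i ∧ m' i ≤ m i + p := by
    intro i
    refine ⟨le_max_left _ _, max_le (by omega) (min_le_left _ _)⟩
  have hmem : ∀ i, (m' i : ℝ) ≤ 2 ^ ℓ * x i ∧ 2 ^ ℓ * x i ≤ (m' i : ℝ) + 1 := by
    intro i
    obtain ⟨h1, h2⟩ := hx i
    have hf1 : ((⌊2 ^ ℓ * x i⌋:ℤ) : ℝ) ≤ 2 ^ ℓ * x i := Int.floor_le _
    have hf2 : 2 ^ ℓ * x i < (⌊2 ^ ℓ * x i⌋:ℤ) + 1 := Int.lt_floor_add_one _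
    rw [hcast i]
    constructor
    · exact max_le h1 ((min_le_right _ _).trans hf1)
    · rcases le_total ((m i:ℝ) + p) ((⌊2 ^ ℓ * x i⌋:ℤ):ℝ) with hbf | hbf
      · rw [min_eq_left hbf]
        have := le_max_right ((m i:ℝ) - p) ((m i:ℝ) + p)
        linarith
      · rw [min_eq_right hbf]
        have := le_max_right ((m i:ℝ) - p) (((⌊2 ^ ℓ * x i⌋:ℤ)):ℝ)
        linarith
  have hsub : dyadicCell d ℓ m' ⊆ hatQ d p ℓ m := by
    intro z hz
    rw [mem_cell] at hz
    rw [mem_hatQ]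
    intro i
    obtain ⟨a1, a2⟩ := hz i
    obtain ⟨b1, b2⟩ := hbd i
    have c1 : (m i:ℝ) - p ≤ (m' i:ℝ) := by exact_mod_cast b1
    have c2 : (m' i:ℝ) ≤ (m i:ℝ) + p := by exact_mod_cast b2
    constructor <;> linarith
  have hparent : x ∈ dyadicCell d (ℓ - 1) fun i => Int.ediv (m' i) 2 := by
    rw [mem_cell_pred]
    intro i
    have hd : 2 * (Int.ediv (m' i) 2) ≤ m' i ∧ m' i ≤ 2 * (Int.ediv (m' i) 2) + 1 := by
      rw [show Int.ediv (m' i) 2 = m' i / 2 from rfl]; omega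
    obtain ⟨c1, c2⟩ := hmem i
    constructor
    · have : (2 * (Int.ediv (m' i) 2) : ℝ) ≤ (m' i : ℝ) := by exact_mod_cast hd.1
      linarith
    · have : ((m' i : ℝ) + 1) ≤ 2 * (Int.ediv (m' i) 2 : ℝ) + 2 := by
        have : (m' i + 1 : ℤ) ≤ 2 * (Int.ediv (m' i) 2) + 2 := by omega
        exact_mod_cast this
      linarith
  unfold NQ
  exact Set.mem_biUnion hsub hparent

end ClusteredAux


open ClusteredAux

/-- If the hierarchy of subdomains is clustered, then for every
`ℓ = 1, …, n-1` the subdomain `Ω_ℓ` equals both the union of `N_Q ∩ Ω₀` and the union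
of the local support extensions `Q̃ = Q̂ ∩ Ω₀` over all level-`ℓ` cells `Q` of the mesh
with `Q ⊆ ω_ℓ`. -/
theorem clustered_subdomain_representation (d p n : ℕ) (hp : 1 ≤ p)
    (Ω : ℕ → Set (Fin d → ℝ))
    (hΩ0 : Ω 0 = unitCube d)
    (hnest : ∀ ℓ, Ω (ℓ + 1) ⊆ Ω ℓ)
    (hΩn : Ω n = ∅)
    (hclust : clustered d p Ω) :
    ∀ ℓ : ℕ, 1 ≤ ℓ → ℓ ≤ n - 1 →
      Ω ℓ = (⋃ m ∈ {m : Fin d → ℤ | dyadicCell d (ℓ : ℤ) m ⊆ Ω 0 ∧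
              dyadicCell d (ℓ : ℤ) m ⊆ omegaSet d p Ω ℓ},
            NQ d p (ℓ : ℤ) m ∩ Ω 0) ∧
      Ω ℓ = (⋃ m ∈ {m : Fin d → ℤ | dyadicCell d (ℓ : ℤ) m ⊆ Ω 0 ∧
              dyadicCell d (ℓ : ℤ) m ⊆ omegaSet d p Ω ℓ},
            hatQ d p (ℓ : ℤ) m ∩ Ω 0) := by
  intro ℓ hℓ _
  obtain ⟨K, hK, hΩℓ⟩ := hclust ℓ hℓ
  set S : Set (Fin d → ℤ) := {m : Fin d → ℤ | dyadicCell d (ℓ : ℤ) m ⊆ Ω 0 ∧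
      dyadicCell d (ℓ : ℤ) m ⊆ omegaSet d p Ω ℓ} with hS
  have hp0 : (0:ℝ) ≤ p := Nat.cast_nonneg p
  have hEpos := two_zpow_pos (ℓ:ℤ)
  obtain ⟨Ei, hEi⟩ : ∃ E : ℤ, E = 2 ^ ℓ := ⟨_, rfl⟩
  have hEcast : (Ei:ℝ) = (2:ℝ) ^ (ℓ:ℤ) := by rw [hEi]; exact cast_pow ℓ
  -- Part A : Ω ℓ ⊆ ⋃ m ∈ S, hatQ ∩ Ω 0
  have hA : Ω ℓ ⊆ ⋃ m ∈ S, hatQ d p (ℓ:ℤ) m ∩ Ω 0 := by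
    intro x hx
    rw [hΩℓ] at hx
    simp only [Set.mem_iUnion, exists_prop] at hx
    obtain ⟨k, hkK, hxB0⟩ := hx
    have hx0 : x ∈ Ω 0 := hxB0.2
    have hxB : ∀ i, 2 * (k i:ℝ) ≤ 2^(ℓ:ℤ) * x i ∧ 2^(ℓ:ℤ) * x i ≤ 2 * (k i:ℝ) + 2*p + 2 := by
      have := hxB0.1; rwa [mem_bsupp_pred] at this
    have hxu : ∀ i, 0 ≤ 2^(ℓ:ℤ) * x i ∧ 2^(ℓ:ℤ) * x i ≤ 2^(ℓ:ℤ) := by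
      have := hx0; rwa [hΩ0, mem_unit_scaled (ℓ:ℤ)] at this
    obtain ⟨m₀, hm₀Ω, hm₀B⟩ := hK k hkK
    have hm₀u : ∀ i, 0 ≤ m₀ i ∧ m₀ i + 1 ≤ Ei := by
      intro i; rw [hEi]
      exact cell_subset_unit (by rw [hΩ0] at hm₀Ω; exact hm₀Ω) i
    have hcore : ∀ i, 2 * k i + p ≤ m₀ i ∧ m₀ i ≤ 2 * k i + p + 1 :=
      fun i => hatQ_subset_bsupp hm₀B i
    set a : Fin d → ℤ := fun i =>
      if (2:ℝ)^(ℓ:ℤ) * x i ≤ 2 * (k i:ℝ) + 2*p + 1 ∧ 0 ≤ 2 * k i + (p:ℤ) ∧ 2 * k i + p + 1 ≤ Ei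
      then 2 * k i + p else 2 * k i + p + 1 with ha
    have key : ∀ i, (0 ≤ a i ∧ a i + 1 ≤ Ei) ∧
        ((a i:ℝ) - p ≤ 2^(ℓ:ℤ) * x i ∧ 2^(ℓ:ℤ) * x i ≤ (a i:ℝ) + p + 1) ∧
        (2 * k i ≤ a i - (p:ℤ) ∧ a i + p + 1 ≤ 2 * k i + 2 * p + 2) := by
      intro i
      obtain ⟨hb1, hb2⟩ := hxB i
      obtain ⟨hu1, hu2⟩ := hxu i
      obtain ⟨hc1, hc2⟩ := hcore i
      obtain ⟨hv1, hv2⟩ := hm₀u i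
      simp only [ha]
      by_cases hcond : (2:ℝ)^(ℓ:ℤ) * x i ≤ 2 * (k i:ℝ) + 2*p + 1 ∧
          0 ≤ 2 * k i + (p:ℤ) ∧ 2 * k i + p + 1 ≤ Ei
      · rw [if_pos hcond]
        obtain ⟨w1, w2, w3⟩ := hcond
        refine ⟨⟨by omega, by omega⟩, ⟨?_, ?_⟩, by omega, by omega⟩
        · push_cast; linarith
        · push_cast; linarith
      · rw [if_neg hcond]
        by_cases hreal : (2:ℝ)^(ℓ:ℤ) * x i ≤ 2 * (k i:ℝ) + 2*p + 1
        · have hneg : ¬ (0 ≤ 2 * k i + (p:ℤ) ∧ 2 * k i + p + 1 ≤ Ei) := by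
            intro hcc; exact hcond ⟨hreal, hcc⟩
          refine ⟨⟨by omega, by omega⟩, ⟨?_, ?_⟩, by omega, by omega⟩
          · -- x̃ ≥ 2k+1 ; here 2k+p ≤ -1
            have hko : 2 * k i + (p:ℤ) ≤ -1 := by omega
            have : 2 * (k i:ℝ) + p ≤ -1 := by exact_mod_cast hko
            push_cast; linarith
          · push_cast; linarith
        · -- x̃ > 2k+2p+1
          push_neg at hreal
          have hEr : (2 * (k i:ℝ) + 2*p + 1) < (Ei:ℝ) := by rw [hEcast]; linarith
          have hEio : 2 * k i + 2*(p:ℤ) + 2 ≤ Ei := by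
            have : (2 * (k i:ℝ) + 2*p + 2) ≤ (Ei:ℝ) := by
              have h' : ((2 * k i + 2*(p:ℤ) + 1 : ℤ):ℝ) < (Ei:ℝ) := by push_cast; linarith
              have h'' : (2 * k i + 2*(p:ℤ) + 1 : ℤ) < Ei := by exact_mod_cast h'
              have := h''
              push_cast
              exact_mod_cast (by omega : (2 * k i + 2*(p:ℤ) + 2 : ℤ) ≤ Ei)
            exact_mod_cast this
          refine ⟨⟨by omega, by omega⟩, ⟨?_, ?_⟩, by omega, by omega⟩
          · push_cast; linarith
          · push_cast; linarith
    -- a gives the covering cell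
    have hacell : dyadicCell d (ℓ:ℤ) a ⊆ Ω 0 := by
      rw [hΩ0]
      intro z hz
      rw [mem_cell] at hz
      rw [mem_unit_scaled (ℓ:ℤ)]
      intro i
      obtain ⟨⟨q1, q2⟩, _, _⟩ := key i
      obtain ⟨z1, z2⟩ := hz i
      have c1 : (0:ℝ) ≤ (a i:ℝ) := by exact_mod_cast q1
      have c2 : ((a i:ℝ) + 1) ≤ (Ei:ℝ) := by exact_mod_cast q2
      rw [hEcast] at c2
      constructor <;> linarith
    have hQa : hatQ d p (ℓ:ℤ) a ∩ Ω 0 ⊆ Ω ℓ := by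
      rw [hΩℓ]
      refine Set.Subset.trans ?_ (Set.subset_biUnion_of_mem hkK)
      apply Set.inter_subset_inter_left
      intro z hz
      rw [mem_hatQ] at hz
      rw [mem_bsupp_pred]
      intro i
      obtain ⟨_, _, r1, r2⟩ := key i
      obtain ⟨z1, z2⟩ := hz i
      have c1 : 2 * (k i:ℝ) ≤ (a i:ℝ) - p := by exact_mod_cast r1
      have c2 : ((a i:ℝ) + p + 1) ≤ 2 * (k i:ℝ) + 2*p + 2 := by exact_mod_cast r2
      constructor <;> linarith
    have haS : a ∈ S := by
      refine ⟨hacell, ?_⟩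
      unfold omegaSet
      exact Set.subset_biUnion_of_mem (show a ∈ {m : Fin d → ℤ | dyadicCell d (ℓ:ℤ) m ⊆ Ω 0 ∧
        hatQ d p (ℓ:ℤ) m ∩ Ω 0 ⊆ Ω ℓ} from ⟨hacell, hQa⟩)
    refine Set.mem_biUnion haS ⟨?_, hx0⟩
    rw [mem_hatQ]
    intro i
    exact (key i).2.1
  -- Part B : for m ∈ S, NQ m ∩ Ω 0 ⊆ Ω ℓ
  have hB : ∀ m ∈ S, NQ d p (ℓ:ℤ) m ∩ Ω 0 ⊆ Ω ℓ := by
    intro m hm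
    obtain ⟨hm0, hmω⟩ := hm
    have hmu : ∀ i, 0 ≤ m i ∧ m i + 1 ≤ Ei := by
      intro i; rw [hEi]
      exact cell_subset_unit (by rw [hΩ0] at hm0; exact hm0) i
    have hQm : hatQ d p (ℓ:ℤ) m ∩ Ω 0 ⊆ Ω ℓ := by
      have hc : (fun i => ((m i:ℝ) + 1/2) / 2^(ℓ:ℤ)) ∈ omegaSet d p Ω ℓ :=
        hmω (center_mem_cell m)
      unfold omegaSet at hc
      simp only [Set.mem_iUnion, exists_prop, Set.mem_setOf_eq] at hc
      obtain ⟨m'', ⟨h1, h2⟩, hcm⟩ := hc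
      have hmm : m'' = m := by
        funext i
        rw [mem_cell] at hcm
        obtain ⟨u1, u2⟩ := hcm i
        rw [scale_div] at u1 u2
        have e1 : (2 * m'' i : ℤ) ≤ 2 * m i + 1 := by
          have : (2 * (m'' i:ℝ)) ≤ 2 * (m i:ℝ) + 1 := by linarith
          exact_mod_cast this
        have e2 : (2 * m i + 1 : ℤ) ≤ 2 * m'' i + 2 := by
          have : (2 * (m i:ℝ) + 1) ≤ 2 * (m'' i:ℝ) + 2 := by linarith
          exact_mod_cast this
        omega
      rwa [hmm] at h2
    rintro x ⟨hxN, hx0⟩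
    unfold NQ at hxN
    simp only [Set.mem_iUnion, exists_prop, Set.mem_setOf_eq] at hxN
    obtain ⟨m', hm'sub, hxP⟩ := hxN
    have hm'b : ∀ i, m i - p ≤ m' i ∧ m' i ≤ m i + p := fun i => cell_subset_hatQ hm'sub i
    rw [mem_cell_pred] at hxP
    have hq : ∀ i, 2 * (Int.ediv (m' i) 2) ≤ m' i ∧ m' i ≤ 2 * (Int.ediv (m' i) 2) + 1 := by
      intro i; rw [show Int.ediv (m' i) 2 = m' i / 2 from rfl]; omega
    have hxu : ∀ i, 0 ≤ 2^(ℓ:ℤ) * x i ∧ 2^(ℓ:ℤ) * x i ≤ 2^(ℓ:ℤ) := by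
      have := hx0; rwa [hΩ0, mem_unit_scaled (ℓ:ℤ)] at this
    set yt : Fin d → ℝ := fun i =>
      max (max 0 ((m i:ℝ) - p)) (min (min ((2:ℝ)^(ℓ:ℤ)) ((m i:ℝ) + p + 1)) (2^(ℓ:ℤ) * x i))
      with hyt
    have hymem : ∀ i, ((m i:ℝ) - p ≤ yt i ∧ yt i ≤ (m i:ℝ) + p + 1) ∧
        (0 ≤ yt i ∧ yt i ≤ (2:ℝ)^(ℓ:ℤ)) := by
      intro i
      have hv1 : (0:ℝ) ≤ (m i:ℝ) := by exact_mod_cast (hmu i).1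
      have hv2 : ((m i:ℝ) + 1) ≤ (Ei:ℝ) := by exact_mod_cast (hmu i).2
      rw [hEcast] at hv2
      simp only [hyt]
      refine ⟨⟨?_, ?_⟩, ?_, ?_⟩
      · exact (le_max_right 0 ((m i:ℝ) - p)).trans (le_max_left _ _)
      · exact max_le (max_le (by linarith) (by linarith))
          ((min_le_left _ _).trans (min_le_right _ _))
      · exact (le_max_left 0 ((m i:ℝ) - p)).trans (le_max_left _ _)
      · exact max_le (max_le (by linarith) (by linarith))
          ((min_le_left _ _).trans (min_le_left _ _))
    have hyQ : (fun i => yt i / 2^(ℓ:ℤ)) ∈ hatQ d p (ℓ:ℤ) m ∩ Ω 0 := by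
      constructor
      · rw [mem_hatQ]; intro i; rw [scale_div]; exact (hymem i).1
      · rw [hΩ0, mem_unit_scaled (ℓ:ℤ)]; intro i; rw [scale_div]; exact (hymem i).2
    have hyΩ := hQm hyQ
    rw [hΩℓ] at hyΩ
    simp only [Set.mem_iUnion, exists_prop] at hyΩ
    obtain ⟨k, hkK, hyk⟩ := hyΩ
    have hyB : ∀ i, 2 * (k i:ℝ) ≤ yt i ∧ yt i ≤ 2 * (k i:ℝ) + 2*p + 2 := by
      have := hyk.1
      rw [mem_bsupp_pred] at this
      intro i
      have h := this i
      rwa [scale_div] at h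
    rw [hΩℓ]
    refine Set.mem_biUnion hkK ⟨?_, hx0⟩
    rw [mem_bsupp_pred]
    intro i
    obtain ⟨g1, g2⟩ := hyB i
    obtain ⟨f1a, f1b⟩ := hm'b i
    obtain ⟨f2a, f2b⟩ := hq i
    obtain ⟨p1, p2⟩ := hxP i
    obtain ⟨hu1, hu2⟩ := hxu i
    constructor
    · -- lower bound
      rcases le_or_gt (max 0 ((m i:ℝ) - p)) (2^(ℓ:ℤ) * x i) with hcse | hcse
      · have hyx : yt i ≤ 2^(ℓ:ℤ) * x i := by
          simp only [hyt]; exact max_le hcse (min_le_right _ _)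
        linarith
      · have hyα : yt i = max 0 ((m i:ℝ) - p) := by
          simp only [hyt]
          exact max_eq_left ((min_le_right _ _).trans hcse.le)
        rw [hyα] at g1
        rcases le_max_iff.mp g1 with h0 | hmp
        · linarith
        · have hint : (2 * k i : ℤ) ≤ m i - p := by exact_mod_cast hmp
          have hint2 : (2 * k i : ℤ) ≤ 2 * (Int.ediv (m' i) 2) := by omega
          have : (2 * (k i:ℝ)) ≤ 2 * ((Int.ediv (m' i) 2 : ℤ):ℝ) := by exact_mod_cast hint2
          linarith
    · -- upper bound
      rcases le_or_gt (2^(ℓ:ℤ) * x i) (min ((2:ℝ)^(ℓ:ℤ)) ((m i:ℝ) + p + 1)) with hcse | hcse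
      · have hxy : 2^(ℓ:ℤ) * x i ≤ yt i := by
          simp only [hyt]
          rw [min_eq_right hcse]
          exact le_max_right _ _
        linarith
      · have hβ : min ((2:ℝ)^(ℓ:ℤ)) ((m i:ℝ) + p + 1) ≤ yt i := by
          simp only [hyt]
          rw [min_eq_left hcse.le]
          exact le_max_right _ _
        rcases le_total ((2:ℝ)^(ℓ:ℤ)) ((m i:ℝ) + p + 1) with hEm | hEm
        · rw [min_eq_left hEm] at hβ
          linarith
        · rw [min_eq_right hEm] at hβ
          have hint1 : (m i + p + 1 : ℤ) ≤ 2 * k i + 2 * p + 2 := by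
            have : ((m i:ℝ) + p + 1) ≤ 2 * (k i:ℝ) + 2*p + 2 := by linarith
            exact_mod_cast this
          have hint2 : 2 * (Int.ediv (m' i) 2) + 2 ≤ 2 * k i + 2*(p:ℤ) + 2 := by omega
          have : 2 * ((Int.ediv (m' i) 2 : ℤ):ℝ) + 2 ≤ 2 * (k i:ℝ) + 2*p + 2 := by
            exact_mod_cast hint2
          linarith
  -- assemble
  have hhat : ∀ m : Fin d → ℤ, hatQ d p (ℓ:ℤ) m ⊆ NQ d p (ℓ:ℤ) m :=
    fun m => hatQ_subset_NQ m
  constructor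
  · apply Set.Subset.antisymm
    · exact hA.trans (Set.iUnion₂_mono fun m _ =>
        Set.inter_subset_inter_left _ (hhat m))
    · exact Set.iUnion₂_subset hB
  · apply Set.Subset.antisymm
    · exact hA
    · exact Set.iUnion₂_subset fun m hm =>
        (Set.inter_subset_inter_left _ (hhat m)).trans (hB m hm)
end
end

section
/- Let the hierarchy of subdomains be clustered. Then the hierarchical mesh is weakly admissible if and only if every level-ℓ cell Q with Q ⊆ Ω_ℓ satisfies N_Q ∩ Ω₀ ⊆ Ω_{ℓ−1}. -/
noncomputable section

namespace WAHMaux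

lemma zp (s : ℤ) : (0:ℝ) < 2 ^ s := by positivity

lemma ddiv (s : ℤ) {a b : ℝ} : a / 2^s ≤ b / 2^s ↔ a ≤ b :=
  div_le_div_iff_of_pos_right (zp s)

lemma idiv (s : ℤ) {a b : ℤ} : (a:ℝ) / 2^s ≤ (b:ℝ) / 2^s ↔ a ≤ b := by
  rw [ddiv]; exact Int.cast_le

def box (d : ℕ) (s : ℤ) (lo hi : Fin d → ℤ) : Set (Fin d → ℝ) :=
  Set.univ.pi fun i => Set.Icc ((lo i : ℝ)/2^s) ((hi i : ℝ)/2^s)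

lemma mem_box {d : ℕ} {s : ℤ} {lo hi : Fin d → ℤ} {x : Fin d → ℝ} :
    x ∈ box d s lo hi ↔ ∀ i, (lo i : ℝ)/2^s ≤ x i ∧ x i ≤ (hi i : ℝ)/2^s := by
  simp [box, Set.mem_univ_pi, Set.mem_Icc, Pi.le_def, forall_and]

lemma box_subset {d : ℕ} {s : ℤ} {lo hi lo' hi' : Fin d → ℤ}
    (h : ∀ i, lo' i ≤ lo i ∧ hi i ≤ hi' i) :
    box d s lo hi ⊆ box d s lo' hi' := by
  intro x hx
  rw [mem_box] at hx ⊢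
  intro i
  exact ⟨le_trans ((idiv s).mpr (h i).1) (hx i).1, le_trans (hx i).2 ((idiv s).mpr (h i).2)⟩

lemma box_subset_iff {d : ℕ} {s : ℤ} {lo hi lo' hi' : Fin d → ℤ} (hne : ∀ i, lo i ≤ hi i) :
    box d s lo hi ⊆ box d s lo' hi' ↔ ∀ i, lo' i ≤ lo i ∧ hi i ≤ hi' i := by
  constructor
  · intro hs i
    have hmem : (fun j => (lo j : ℝ)/2^s) ∈ box d s lo hi := by
      rw [mem_box]; intro j; exact ⟨le_refl _, (idiv s).mpr (hne j)⟩
    have h1 := (mem_box.mp (hs hmem)) i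
    have hmem2 : (Function.update (fun j => (lo j : ℝ)/2^s) i ((hi i : ℝ)/2^s)) ∈ box d s lo hi := by
      rw [mem_box]; intro j
      rcases eq_or_ne j i with rfl | hj
      · simp only [Function.update_self]
        exact ⟨(idiv s).mpr (hne j), le_refl _⟩
      · simp only [Function.update_of_ne hj]
        exact ⟨le_refl _, (idiv s).mpr (hne j)⟩
    have h2 := (mem_box.mp (hs hmem2)) i
    simp only [Function.update_self] at h2
    exact ⟨(idiv s).mp h1.1, (idiv s).mp h2.2⟩
  · exact box_subset

lemma cell_eq (d : ℕ) (s : ℤ) (m : Fin d → ℤ) :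
    dyadicCell d s m = box d s m (fun i => m i + 1) := by
  unfold dyadicCell box
  apply congrArg
  funext i
  push_cast
  rfl

lemma hatQ_eq (d p : ℕ) (s : ℤ) (m : Fin d → ℤ) :
    hatQ d p s m = box d s (fun i => m i - p) (fun i => m i + p + 1) := by
  unfold hatQ box
  apply congrArg
  funext i
  push_cast
  rfl

lemma bsupp_eq (d p : ℕ) (s : ℤ) (k : Fin d → ℤ) :
    bsupp d p s k = box d s k (fun i => k i + p + 1) := by
  unfold bsupp box
  apply congrArg
  funext i
  push_cast
  rfl

lemma box_shift (d : ℕ) (s : ℤ) (lo hi : Fin d → ℤ) :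
    box d (s-1) lo hi = box d s (fun i => 2 * lo i) (fun i => 2 * hi i) := by
  unfold box
  apply congrArg
  funext i
  have h2 : (2:ℝ)^s = 2^(s-1) * 2 := by
    rw [← zpow_add_one₀ (by norm_num : (2:ℝ) ≠ 0)]
    norm_num
  have hne : (2:ℝ)^(s-1) ≠ 0 := ne_of_gt (zp _)
  have key : ∀ a : ℤ, ((a:ℝ))/2^(s-1) = ((2*a : ℤ):ℝ)/2^s := by
    intro a
    push_cast
    rw [h2]
    field_simp
  rw [key (lo i), key (hi i)]

lemma unit_eq (d ℓ : ℕ) : unitCube d = box d (ℓ:ℤ) (fun _ => 0) (fun _ => 2^ℓ) := by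
  unfold unitCube box
  apply congrArg
  funext i
  have h1 : ((0:ℤ):ℝ)/2^(ℓ:ℤ) = 0 := by norm_num
  have h2 : (((2^ℓ:ℤ)):ℝ)/2^(ℓ:ℤ) = 1 := by
    push_cast
    rw [← zpow_natCast (2:ℝ) ℓ]
    exact div_self (ne_of_gt (zp _))
  rw [h1, h2]

lemma mem_unit {d : ℕ} {x : Fin d → ℝ} : x ∈ unitCube d ↔ ∀ i, 0 ≤ x i ∧ x i ≤ 1 := by
  simp [unitCube, Set.mem_univ_pi, Set.mem_Icc, Pi.le_def, forall_and]

lemma center_mem (d : ℕ) (s : ℤ) (m : Fin d → ℤ) :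
    (fun i => ((m i : ℝ) + 1/2)/2^s) ∈ dyadicCell d s m := by
  rw [cell_eq, mem_box]
  intro i
  constructor
  · rw [ddiv]; linarith
  · rw [ddiv]; push_cast; linarith

lemma center_in_bsupp {d p : ℕ} {s : ℤ} {k m : Fin d → ℤ}
    (h : (fun i => ((m i : ℝ) + 1/2)/2^s) ∈ bsupp d p (s-1) k) (i : Fin d) :
    2 * k i ≤ m i ∧ m i + 1 ≤ 2 * k i + 2 * p + 2 := by
  rw [bsupp_eq, box_shift, mem_box] at h
  have h1 := (h i).1
  have h2 := (h i).2
  rw [ddiv] at h1 h2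
  push_cast at h1 h2
  constructor
  · have h3 : ((2 * k i : ℤ) : ℝ) < ((m i + 1 : ℤ) : ℝ) := by push_cast; linarith
    have := Int.cast_lt.mp h3
    omega
  · have h3 : ((m i : ℤ) : ℝ) < ((2 * k i + 2 * p + 2 : ℤ) : ℝ) := by push_cast; linarith
    have := Int.cast_lt.mp h3
    omega

lemma center_in_cell_pred {d : ℕ} {s : ℤ} {e m : Fin d → ℤ}
    (h : (fun i => ((m i : ℝ) + 1/2)/2^s) ∈ dyadicCell d (s-1) e) (i : Fin d) :
    2 * e i ≤ m i ∧ m i ≤ 2 * e i + 1 := by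
  rw [cell_eq, box_shift, mem_box] at h
  have h1 := (h i).1
  have h2 := (h i).2
  rw [ddiv] at h1 h2
  push_cast at h1 h2
  constructor
  · have h3 : ((2 * e i : ℤ) : ℝ) < ((m i + 1 : ℤ) : ℝ) := by push_cast; linarith
    have := Int.cast_lt.mp h3
    omega
  · have h3 : ((m i : ℤ) : ℝ) < ((2 * e i + 2 : ℤ) : ℝ) := by push_cast; linarith
    have := Int.cast_lt.mp h3
    omega

lemma exists_t (s : ℤ) {lo hi : ℤ} (h : lo ≤ hi) {y : ℝ}
    (h1 : (lo:ℝ)/2^s ≤ y) (h2 : y ≤ ((hi:ℝ)+1)/2^s) :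
    ∃ t : ℤ, lo ≤ t ∧ t ≤ hi ∧ (t:ℝ)/2^s ≤ y ∧ y ≤ ((t:ℝ)+1)/2^s := by
  have hL : (0:ℝ) < 2^s := zp s
  set g : ℤ := ⌊y * 2^s⌋ with hg
  have hg1 : (g:ℝ) ≤ y * 2^s := Int.floor_le _
  have hg2 : y * 2^s < g + 1 := Int.lt_floor_add_one _
  rcases lt_or_ge g lo with hc | hc
  · refine ⟨lo, le_refl _, h, h1, ?_⟩
    rw [le_div_iff₀ hL]
    have : (g:ℝ) + 1 ≤ lo := by exact_mod_cast hc
    linarith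
  · rcases le_or_gt g hi with hc2 | hc2
    · refine ⟨g, hc, hc2, ?_, ?_⟩
      · rw [div_le_iff₀ hL]; linarith
      · rw [le_div_iff₀ hL]; linarith
    · refine ⟨hi, h, le_refl _, ?_, h2⟩
      rw [div_le_iff₀ hL]
      have : (hi:ℝ) + 1 ≤ g := by exact_mod_cast hc2
      linarith

lemma NQ_cond {d p : ℕ} {s : ℤ} {m m' : Fin d → ℤ} :
    dyadicCell d s m' ⊆ hatQ d p s m ↔ ∀ i, m i - p ≤ m' i ∧ m' i ≤ m i + p := by
  rw [cell_eq, hatQ_eq, box_subset_iff (fun i => by omega)]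
  constructor <;> intro h i <;> have h' := h i <;> omega

lemma mem_NQ {d p : ℕ} {s : ℤ} {m m' : Fin d → ℤ}
    (h : ∀ i, m i - p ≤ m' i ∧ m' i ≤ m i + p)
    {x : Fin d → ℝ} (hx : x ∈ dyadicCell d (s-1) (fun i => m' i / 2)) :
    x ∈ NQ d p s m := by
  unfold NQ
  rw [Set.mem_iUnion₂]
  exact ⟨m', NQ_cond.mpr h, hx⟩

lemma NQ_subset {d p : ℕ} {s : ℤ} {m : Fin d → ℤ} {S : Set (Fin d → ℝ)}
    (h : ∀ m' : Fin d → ℤ, (∀ i, m i - p ≤ m' i ∧ m' i ≤ m i + p) →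
      dyadicCell d (s-1) (fun i => m' i / 2) ⊆ S) :
    NQ d p s m ⊆ S := by
  unfold NQ
  rw [Set.iUnion₂_subset_iff]
  intro m' hm'
  exact h m' (NQ_cond.mp hm')

lemma mem_omega {d p : ℕ} {Ω : ℕ → Set (Fin d → ℝ)} {ℓ : ℕ} {x : Fin d → ℝ} :
    x ∈ omegaSet d p Ω ℓ ↔ ∃ m : Fin d → ℤ, (dyadicCell d (ℓ:ℤ) m ⊆ Ω 0 ∧
      hatQ d p (ℓ:ℤ) m ∩ Ω 0 ⊆ Ω ℓ) ∧ x ∈ dyadicCell d (ℓ:ℤ) m := by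
  unfold omegaSet
  rw [Set.mem_iUnion₂]
  simp only [Set.mem_setOf_eq, exists_prop]

end WAHMaux

open WAHMaux

/-- (Second WAHM characterization.) Let the hierarchy of subdomains be
clustered. Then the hierarchical mesh is weakly admissible if and only if every level-`ℓ`
cell `Q` of the mesh with `Q ⊆ Ω_ℓ` satisfies `N_Q ∩ Ω₀ ⊆ Ω_{ℓ-1}`. -/
theorem weakly_admissible_iff_cells_of_subdomain (d p n : ℕ) (hp : 1 ≤ p)
    (Ω : ℕ → Set (Fin d → ℝ))
    (hΩ0 : Ω 0 = unitCube d)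
    (hnest : ∀ ℓ, Ω (ℓ + 1) ⊆ Ω ℓ)
    (hΩn : Ω n = ∅)
    (hclust : clustered d p Ω) :
    (∀ ℓ : ℕ, 1 ≤ ℓ → ℓ ≤ n - 1 → omegaSet d p Ω ℓ ⊆ omegaSet d p Ω (ℓ - 1)) ↔
      (∀ ℓ : ℕ, 1 ≤ ℓ → ℓ ≤ n - 1 → ∀ m : Fin d → ℤ,
        dyadicCell d (ℓ : ℤ) m ⊆ Ω 0 →
        dyadicCell d (ℓ : ℤ) m ⊆ Ω ℓ →
        NQ d p (ℓ : ℤ) m ∩ Ω 0 ⊆ Ω (ℓ - 1)) := by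
  constructor
  · intro H ℓ hℓ1 hℓn m hm0 hmℓ
    obtain ⟨K, hKw, hKU⟩ := hclust ℓ hℓ1
    have hΩ0box : Ω 0 = box d (ℓ:ℤ) (fun _ => 0) (fun _ => 2^ℓ) := by
      rw [hΩ0]; exact unit_eq d ℓ
    have hm0' : ∀ i, 0 ≤ m i ∧ m i + 1 ≤ 2^ℓ := by
      rw [hΩ0box, cell_eq, box_subset_iff (fun i => by omega)] at hm0
      intro i; have := hm0 i; omega
    have hc := hmℓ (center_mem d (ℓ:ℤ) m)
    rw [hKU, Set.mem_iUnion₂] at hc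
    obtain ⟨k, hkK, hck⟩ := hc
    have hkm : ∀ i, 2*k i ≤ m i ∧ m i + 1 ≤ 2*k i + 2*p + 2 := center_in_bsupp hck.1
    obtain ⟨m₀, hm₀0, hm₀b⟩ := hKw k hkK
    have hm₀0' : ∀ i, 0 ≤ m₀ i ∧ m₀ i + 1 ≤ 2^ℓ := by
      rw [hΩ0box, cell_eq, box_subset_iff (fun i => by omega)] at hm₀0
      intro i; have := hm₀0 i; omega
    have hm₀b' : ∀ i, 2*k i ≤ m₀ i - p ∧ m₀ i + p + 1 ≤ 2*(k i + p + 1) := by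
      rw [hatQ_eq, bsupp_eq, box_shift, box_subset_iff (fun i => by omega)] at hm₀b
      intro i; have := hm₀b i; omega
    set m' : Fin d → ℤ := fun i => max (2*k i + p) (min (m i) (2*k i + p + 1)) with hm'def
    have hm'facts : ∀ i, m' i - p ≤ m i ∧ m i ≤ m' i + p ∧ 2*k i ≤ m' i - p ∧
        m' i + p + 1 ≤ 2*(k i + p + 1) ∧ 0 ≤ m' i ∧ m' i + 1 ≤ 2^ℓ := by
      intro i
      have h1 := hkm i; have h2 := hm₀0' i; have h3 := hm₀b' i; have h4 := hm0' i
      simp only [hm'def]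
      omega
    have hm'0 : dyadicCell d (ℓ:ℤ) m' ⊆ Ω 0 := by
      rw [hΩ0box, cell_eq]
      exact box_subset (fun i => by have := hm'facts i; omega)
    have hm'hat : hatQ d p (ℓ:ℤ) m' ∩ Ω 0 ⊆ Ω ℓ := by
      rw [hKU]
      intro y hy
      apply Set.mem_biUnion hkK
      refine ⟨?_, hy.2⟩
      have hsub : hatQ d p (ℓ:ℤ) m' ⊆ bsupp d p ((ℓ:ℤ)-1) k := by
        rw [hatQ_eq, bsupp_eq, box_shift]
        exact box_subset (fun i => by have := hm'facts i; omega)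
      exact hsub hy.1
    have hcm' := H ℓ hℓ1 hℓn (mem_omega.mpr ⟨m', ⟨hm'0, hm'hat⟩, center_mem d (ℓ:ℤ) m'⟩)
    rw [mem_omega] at hcm'
    obtain ⟨m'', ⟨hm''0, hm''hat⟩, hcmem⟩ := hcm'
    have hlev : ((ℓ-1:ℕ):ℤ) = (ℓ:ℤ)-1 := by omega
    rw [hlev] at hm''hat hcmem
    have hpar := center_in_cell_pred hcmem
    have hNQ : NQ d p (ℓ:ℤ) m ⊆ hatQ d p ((ℓ:ℤ)-1) m'' := by
      apply NQ_subset
      intro m₃ hm₃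
      rw [cell_eq, hatQ_eq]
      apply box_subset
      intro i
      have h1 := hm₃ i
      have h2 := hm'facts i
      have h3 := hpar i
      omega
    exact fun y hy => hm''hat ⟨hNQ hy.1, hy.2⟩
  · intro H ℓ hℓ1 hℓn x hx
    rw [mem_omega] at hx ⊢
    obtain ⟨m, ⟨hm0, hmhat⟩, hxm⟩ := hx
    have hΩ0box : Ω 0 = box d (ℓ:ℤ) (fun _ => 0) (fun _ => 2^ℓ) := by
      rw [hΩ0]; exact unit_eq d ℓ
    have hm0' : ∀ i, 0 ≤ m i ∧ m i + 1 ≤ 2^ℓ := by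
      rw [hΩ0box, cell_eq, box_subset_iff (fun i => by omega)] at hm0
      intro i; have := hm0 i; omega
    have hMpow : (2:ℤ)^ℓ = 2 * 2^(ℓ-1) := by
      have h : ℓ - 1 + 1 = ℓ := by omega
      calc (2:ℤ)^ℓ = 2^(ℓ-1+1) := by rw [h]
        _ = 2^(ℓ-1) * 2 := pow_succ 2 (ℓ-1)
        _ = 2 * 2^(ℓ-1) := by ring
    have hlev : ((ℓ-1:ℕ):ℤ) = (ℓ:ℤ)-1 := by omega
    set e : Fin d → ℤ := fun i => m i / 2 with hedef
    refine ⟨e, ⟨?_, ?_⟩, ?_⟩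
    · rw [hlev, hΩ0box, cell_eq, box_shift]
      exact box_subset (fun i => by have h1 := hm0' i; simp only [hedef]; omega)
    · rw [hlev]
      intro y hy
      obtain ⟨hy1, hy2⟩ := hy
      rw [hatQ_eq, mem_box] at hy1
      have hy2' : ∀ i, 0 ≤ y i ∧ y i ≤ 1 := by
        rw [hΩ0, mem_unit] at hy2; exact hy2
      have hpowR : (2:ℝ)^(ℓ-1:ℕ) = 2^((ℓ:ℤ)-1) := by
        rw [← zpow_natCast (2:ℝ) (ℓ-1), hlev]
      have hex : ∀ i, ∃ t : ℤ, max (e i - p) 0 ≤ t ∧ t ≤ min (e i + p) (2^(ℓ-1) - 1) ∧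
          ((t:ℝ))/2^((ℓ:ℤ)-1) ≤ y i ∧ y i ≤ ((t:ℝ)+1)/2^((ℓ:ℤ)-1) := by
        intro i
        have hb1 := (hy1 i).1
        have hb2 := (hy1 i).2
        push_cast at hb1 hb2
        have hy0 := hy2' i
        have hL : (0:ℝ) < 2^((ℓ:ℤ)-1) := zp _
        rw [div_le_iff₀ hL] at hb1
        rw [le_div_iff₀ hL] at hb2
        apply exists_t
        · have h1 := hm0' i
          have h2 := hMpow
          simp only [hedef]
          omega
        · rw [div_le_iff₀ hL]
          push_cast
          exact max_le hb1 (mul_nonneg hy0.1 hL.le)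
        · rw [le_div_iff₀ hL]
          push_cast
          rw [min_def]
          split
          · linarith
          · have h2' := mul_le_mul_of_nonneg_right hy0.2 hL.le
            rw [one_mul] at h2'
            rw [hpowR]
            linarith
      choose t ht1 ht2 hty1 hty2 using hex
      have hex2 : ∀ i, ∃ m3 m4 : ℤ, m i - p ≤ m3 ∧ m3 ≤ m i + p ∧ 0 ≤ m3 ∧ m3 + 1 ≤ 2^ℓ ∧
          m3 - p ≤ m4 ∧ m4 ≤ m3 + p ∧ m4 / 2 = t i := by
        intro i
        have h0 := hm0' i
        have h1 := ht1 i
        have h2 := ht2 i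
        have hM := hMpow
        refine ⟨max (m i - p) (min (m i + p) (if 2*(t i) ≥ m i - 2*p then 2*(t i) else 2*(t i)+1)),
          if 2*(t i) ≥ m i - 2*p then 2*(t i) else 2*(t i)+1, ?_, ?_, ?_, ?_, ?_, ?_, ?_⟩ <;>
          · simp only [hedef] at h1 h2
            split <;> omega
      choose m3 m4 hA hB hC hD hE hF hG using hex2
      have hm3Ω0 : dyadicCell d (ℓ:ℤ) m3 ⊆ Ω 0 := by
        rw [hΩ0box, cell_eq]
        exact box_subset (fun i => by have := hC i; have := hD i; omega)
      have hm3Ωℓ : dyadicCell d (ℓ:ℤ) m3 ⊆ Ω ℓ := by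
        intro z hz
        apply hmhat
        refine ⟨?_, hm3Ω0 hz⟩
        have hsub : dyadicCell d (ℓ:ℤ) m3 ⊆ hatQ d p (ℓ:ℤ) m :=
          NQ_cond.mpr (fun i => ⟨hA i, hB i⟩)
        exact hsub hz
      apply H ℓ hℓ1 hℓn m3 hm3Ω0 hm3Ωℓ
      refine ⟨?_, hy2⟩
      apply mem_NQ (m' := m4) (fun i => ⟨hE i, hF i⟩)
      rw [cell_eq, mem_box]
      intro i
      simp only [hG]
      constructor
      · exact hty1 i
      · have h := hty2 i
        push_cast
        linarith
    · rw [hlev]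
      have hsub : dyadicCell d (ℓ:ℤ) m ⊆ dyadicCell d ((ℓ:ℤ)-1) e := by
        rw [cell_eq, cell_eq, box_shift]
        exact box_subset (fun i => by simp only [hedef]; omega)
      exact hsub hxm
end
end

section
/- Let Π₀ := P₀ and Π_{ℓ+1} := Π_ℓ + P_{ℓ+1}(Id − Π_ℓ) for linear operators P_k on L^q(Ω). If the sets ω_0 ⊇ ω_1 ⊇ … ⊇ ω_{n−1} are nested and each P_k satisfies: (a) P_k f = 0 whenever f vanishes on ω_k, and (b) Π_k f = P_k f on ω_k, then for every f and every ℓ, the final operator Π := Π_{n−1} satisfies Π f = P_ℓ f + Σ_{k=ℓ+1}^{n−1} P_k(f − P_{k−1} f) on ω_ℓ. -/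
noncomputable section

/-- The multilevel quasi-interpolant: `Π₀ := P₀` and
`Π_{ℓ+1} := Π_ℓ + P_{ℓ+1} ∘ (Id - Π_ℓ)`. -/
def PiOp {α : Type*} (P : ℕ → ((α → ℝ) →ₗ[ℝ] (α → ℝ))) : ℕ → ((α → ℝ) →ₗ[ℝ] (α → ℝ))
  | 0 => P 0
  | (ℓ + 1) => PiOp P ℓ + (P (ℓ + 1)).comp (LinearMap.id - PiOp P ℓ)

/-- Let `Π₀ := P₀` and `Π_{ℓ+1} := Π_ℓ + P_{ℓ+1}(Id - Π_ℓ)` for linear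
operators `P_k` on a space of functions. If the sets `ω₀ ⊇ ω₁ ⊇ … ⊇ ω_{n-1}` are nested
and each `P_k` satisfies (a) `P_k f = 0` whenever `f` vanishes on `ω_k`, and
(b) `Π_k f = P_k f` on `ω_k`, then for every `f` and every `ℓ`, the final operator
`Π := Π_{n-1}` satisfies `Π f = P_ℓ f + ∑_{k=ℓ+1}^{n-1} P_k (f - P_{k-1} f)` on `ω_ℓ`. -/
theorem PiOp_telescoping {α : Type*} (n : ℕ) (hn : 1 ≤ n) (ω : ℕ → Set α)
    (P : ℕ → ((α → ℝ) →ₗ[ℝ] (α → ℝ)))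
    (hnest : ∀ k, ω (k + 1) ⊆ ω k)
    (hloc : ∀ k, ∀ f : α → ℝ, (∀ x ∈ ω k, f x = 0) → P k f = 0)
    (hPik : ∀ k, ∀ f : α → ℝ, ∀ x ∈ ω k, PiOp P k f x = P k f x) :
    ∀ (f : α → ℝ) (ℓ : ℕ), ℓ ≤ n - 1 → ∀ x ∈ ω ℓ,
      PiOp P (n - 1) f x =
        P ℓ f x + ∑ k ∈ Finset.Icc (ℓ + 1) (n - 1), P k (f - P (k - 1) f) x := by
  intro f ℓ
  generalize n - 1 = m
  induction m with
  | zero =>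
    intro hℓ x hx
    interval_cases ℓ
    simp [PiOp]
  | succ m ih =>
    intro hℓ x hx
    rcases Nat.lt_or_ge ℓ (m + 1) with h | h
    · have hℓm : ℓ ≤ m := Nat.lt_succ_iff.mp h
      have key : P (m + 1) (f - PiOp P m f) = P (m + 1) (f - P m f) := by
        have h0 : P (m + 1) ((f - PiOp P m f) - (f - P m f)) = 0 := by
          apply hloc
          intro y hy
          have := hPik m f y (hnest m hy)
          simp [Pi.sub_apply, this]
        rw [map_sub] at h0
        exact sub_eq_zero.mp h0
      have hstep : PiOp P (m + 1) f x
          = PiOp P m f x + P (m + 1) (f - PiOp P m f) x := by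
        simp [PiOp, LinearMap.sub_apply]
      rw [hstep, key, ih hℓm x hx,
        Finset.sum_Icc_succ_top (by omega : ℓ + 1 ≤ m + 1)]
      simp
      ring
    · have hℓ' : ℓ = m + 1 := le_antisymm hℓ h
      subst hℓ'
      rw [Finset.Icc_eq_empty (by omega)]
      simpa using hPik (m + 1) f x hx
end
end
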